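/- Let p̄_r : [0,L] → ℝ³ be a C² arc-length parameterized curve with curvature bounded by K (i.e., ‖p̄_r''(s)‖ ≤ K for all s). Then for every point p with dist(p, image of p̄_r) < 1/(2K), and any two local minimizers s₁, s₂ ∈ (0,L) of s ↦ ‖p − p̄_r(s)‖² with ‖p − p̄_r(sᵢ)‖ < 1/(2K), satisfying |s₁ − s₂| < 1/K, we have s₁ = s₂. -/

import Mathlib

/-!
Write `g s = ⟪p - γ s, γ' s⟫`, which is `-1/2` times the derivative of `s ↦ ‖p - γ s‖²`, so `g`
vanishes at both minimizers. For a unit-speed curve, `g' = ⟪p - γ, γ''⟫ - 1 ≤ K ‖p - γ‖ - 1`.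
Between `s₁` and `s₂` the curve stays within `1/(2K) + |s₁ - s₂|/2 < 1/K` of `p`, since it moves
no faster than unit speed away from `γ s₁` and `γ s₂`; hence `g' < 0` there and `g` cannot vanish
at both ends.
-/

open Set RealInnerProductSpace

section

variable {E : Type*}

theorem two_mul_norm_sub_le_of_norm_deriv_le_one [NormedAddCommGroup E] [NormedSpace ℝ E]
    {γ : ℝ → E} {a b s : ℝ} (hγ : ∀ t ∈ Icc a b, DifferentiableAt ℝ γ t)
    (hspeed : ∀ t ∈ Icc a b, ‖deriv γ t‖ ≤ 1) (p : E) (hs : s ∈ Icc a b) :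
    2 * ‖p - γ s‖ ≤ ‖p - γ a‖ + ‖p - γ b‖ + (b - a) := by
  have hab : a ≤ b := hs.1.trans hs.2
  have h_a : ‖γ s - γ a‖ ≤ s - a := by
    simpa [Real.norm_eq_abs, abs_of_nonneg (sub_nonneg.2 hs.1)] using
      (convex_Icc a b).norm_image_sub_le_of_norm_deriv_le hγ hspeed (left_mem_Icc.2 hab) hs
  have h_b : ‖γ b - γ s‖ ≤ b - s := by
    simpa [Real.norm_eq_abs, abs_of_nonneg (sub_nonneg.2 hs.2)] using
      (convex_Icc a b).norm_image_sub_le_of_norm_deriv_le hγ hspeed hs (right_mem_Icc.2 hab)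
  have h₁ := norm_sub_le_norm_sub_add_norm_sub p (γ a) (γ s)
  have h₂ := norm_sub_le_norm_sub_add_norm_sub p (γ b) (γ s)
  rw [norm_sub_rev (γ a)] at h₁
  linarith

variable [NormedAddCommGroup E] [InnerProductSpace ℝ E]

theorem inner_sub_deriv_eq_zero_of_isLocalMin {γ : ℝ → E} {p : E} {s : ℝ}
    (hmin : IsLocalMin (fun t => ‖p - γ t‖ ^ 2) s) (hγ : DifferentiableAt ℝ γ s) :
    ⟪p - γ s, deriv γ s⟫ = 0 := by
  have := hmin.hasDerivAt_eq_zero (hγ.hasDerivAt.const_sub p).norm_sq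
  rw [inner_neg_right] at this
  linarith

theorem strictAntiOn_inner_sub_deriv {γ : ℝ → E} {a b : ℝ} (p : E) (hγ : Differentiable ℝ γ)
    (hγ' : Differentiable ℝ (deriv γ)) (hunit : ∀ s ∈ Icc a b, ‖deriv γ s‖ = 1)
    (hcurv : ∀ s ∈ Icc a b, ‖deriv (deriv γ) s‖ * ‖p - γ s‖ < 1) :
    StrictAntiOn (fun s => ⟪p - γ s, deriv γ s⟫) (Icc a b) := by
  have hderiv : ∀ s, HasDerivAt (fun s => ⟪p - γ s, deriv γ s⟫)
      (⟪p - γ s, deriv (deriv γ) s⟫ - ‖deriv γ s‖ ^ 2) s := fun s => by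
    simpa [inner_neg_left, real_inner_self_eq_norm_sq, ← sub_eq_add_neg] using
      ((hγ s).hasDerivAt.const_sub p).inner ℝ (hγ' s).hasDerivAt
  refine strictAntiOn_of_deriv_neg (convex_Icc a b)
    (fun s _ => (hderiv s).continuousAt.continuousWithinAt) fun s hs => ?_
  have hs : s ∈ Icc a b := Ioo_subset_Icc_self (by rwa [interior_Icc] at hs)
  rw [(hderiv s).deriv, hunit s hs]
  calc ⟪p - γ s, deriv (deriv γ) s⟫ - 1 ^ 2
      ≤ ‖deriv (deriv γ) s‖ * ‖p - γ s‖ - 1 := by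
        nlinarith [real_inner_le_norm (p - γ s) (deriv (deriv γ) s)]
    _ < 0 := by linarith [hcurv s hs]

end

theorem projection_local_uniqueness_general
    (L K : ℝ) (hK : 0 < K)
    (pr : ℝ → EuclideanSpace ℝ (Fin 3))
    (hpr : ContDiff ℝ 2 pr)
    (hunit : ∀ s ∈ Set.Icc (0:ℝ) L, ‖deriv pr s‖ = 1)
    (hcurv : ∀ s ∈ Set.Icc (0:ℝ) L, ‖deriv (deriv pr) s‖ ≤ K)
    (p : EuclideanSpace ℝ (Fin 3))
    (s₁ s₂ : ℝ)
    (hs₁ : s₁ ∈ Set.Ioo (0:ℝ) L) (hs₂ : s₂ ∈ Set.Ioo (0:ℝ) L)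
    (hmin₁ : IsLocalMin (fun s => ‖p - pr s‖ ^ 2) s₁)
    (hmin₂ : IsLocalMin (fun s => ‖p - pr s‖ ^ 2) s₂)
    (hd₁ : ‖p - pr s₁‖ < 1 / (2 * K))
    (hd₂ : ‖p - pr s₂‖ < 1 / (2 * K))
    (hclose : |s₁ - s₂| < 1 / K) :
    s₁ = s₂ := by
  wlog hlt : s₁ < s₂ generalizing s₁ s₂
  · rcases (not_lt.1 hlt).lt_or_eq with h | h
    · exact (this s₂ s₁ hs₂ hs₁ hmin₂ hmin₁ hd₂ hd₁ (by rwa [abs_sub_comm]) h).symm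
    · exact h.symm
  have hsub : Icc s₁ s₂ ⊆ Icc 0 L := Icc_subset_Icc hs₁.1.le hs₂.2.le
  have hγ : Differentiable ℝ pr := hpr.differentiable two_ne_zero
  have hnear : ∀ s ∈ Icc s₁ s₂, ‖p - pr s‖ < 1 / K := fun s hs => by
    have := two_mul_norm_sub_le_of_norm_deriv_le_one (fun t _ => hγ t)
      (fun t ht => (hunit t (hsub ht)).le) p hs
    have : s₂ - s₁ < 1 / K := (le_abs_self _).trans_lt (by rwa [abs_sub_comm])
    have : 1 / (2 * K) = 1 / K / 2 := by ring
    linarith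
  have hanti := strictAntiOn_inner_sub_deriv p hγ hpr.differentiable_deriv_two
    (fun s hs => hunit s (hsub hs)) fun s hs => calc
      ‖deriv (deriv pr) s‖ * ‖p - pr s‖ < K * (1 / K) :=
        mul_lt_mul_of_le_of_lt_of_nonneg_of_pos (hcurv s (hsub hs)) (hnear s hs) (norm_nonneg _) hK
      _ = 1 := by field_simp
  have := hanti (left_mem_Icc.2 hlt.le) (right_mem_Icc.2 hlt.le) hlt
  simp only [inner_sub_deriv_eq_zero_of_isLocalMin hmin₁ (hγ s₁),
    inner_sub_deriv_eq_zero_of_isLocalMin hmin₂ (hγ s₂), lt_self_iff_false] at this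

/-- local uniqueness of the orthogonal projection onto a curve
with curvature bounded by `K`: two nearby local minimizers of the squared
distance, both within distance `1/(2K)` of `p` and within `1/K` of each other,
coincide. -/
theorem projection_local_uniqueness
    (L K : ℝ) (hL : 0 < L) (hK : 0 < K)
    (pr : ℝ → EuclideanSpace ℝ (Fin 3))
    (hpr : ContDiff ℝ 2 pr)
    (hunit : ∀ s ∈ Set.Icc (0:ℝ) L, ‖deriv pr s‖ = 1)
    (hcurv : ∀ s ∈ Set.Icc (0:ℝ) L, ‖deriv (deriv pr) s‖ ≤ K)
    (p : EuclideanSpace ℝ (Fin 3))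
    (hdist : Metric.infDist p (pr '' Set.Icc (0:ℝ) L) < 1 / (2 * K))
    (s₁ s₂ : ℝ)
    (hs₁ : s₁ ∈ Set.Ioo (0:ℝ) L) (hs₂ : s₂ ∈ Set.Ioo (0:ℝ) L)
    (hmin₁ : IsLocalMin (fun s => ‖p - pr s‖ ^ 2) s₁)
    (hmin₂ : IsLocalMin (fun s => ‖p - pr s‖ ^ 2) s₂)
    (hd₁ : ‖p - pr s₁‖ < 1 / (2 * K))
    (hd₂ : ‖p - pr s₂‖ < 1 / (2 * K))
    (hclose : |s₁ - s₂| < 1 / K) :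
    s₁ = s₂ :=
  projection_local_uniqueness_general L K hK pr hpr hunit hcurv p s₁ s₂ hs₁ hs₂ hmin₁ hmin₂ hd₁ hd₂
    hclose
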